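/- arXiv:1409.1185 — 2 statements merged into one kernel-verified Lean document; each statement's English description precedes it below -/
import Mathlib

section
/- If a symmetric bilinear form S on ℝ³ is invariant under the full identity component of O(2,1) acting on ℝ³ (i.e. A S Aᵀ = S for all A in SO(2,1)₀), then S is a scalar multiple of the metric g = diag(−1,1,1). -/
open Matrix Real

noncomputable def rotM (θ : ℝ) : Matrix (Fin 3) (Fin 3) ℝ :=
  !![1, 0, 0; 0, Real.cos θ, -Real.sin θ; 0, Real.sin θ, Real.cos θ]

noncomputable def boostM (u : ℝ) : Matrix (Fin 3) (Fin 3) ℝ :=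
  !![Real.cosh u, Real.sinh u, 0; Real.sinh u, Real.cosh u, 0; 0, 0, 1]

lemma path_mem_component {F : Set (Matrix (Fin 3) (Fin 3) ℝ)}
    (γ : ℝ → Matrix (Fin 3) (Fin 3) ℝ) (hc : Continuous γ)
    (h0 : γ 0 = 1) (hmem : ∀ t, γ t ∈ F) :
    γ 1 ∈ connectedComponentIn F (1 : Matrix (Fin 3) (Fin 3) ℝ) := by
  have hconn : IsPreconnected (Set.range γ) := (isConnected_range hc).isPreconnected
  have h1mem : (1 : Matrix (Fin 3) (Fin 3) ℝ) ∈ Set.range γ := ⟨0, h0⟩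
  exact hconn.subset_connectedComponentIn h1mem
    (Set.range_subset_iff.mpr hmem) ⟨1, rfl⟩

lemma rot_mem (θ : ℝ) :
    rotM θ ∈ connectedComponentIn
      {A : Matrix (Fin 3) (Fin 3) ℝ |
        Aᵀ * !![-1, 0, 0; 0, 1, 0; 0, 0, 1] * A = !![-1, 0, 0; 0, 1, 0; 0, 0, 1]}
      (1 : Matrix (Fin 3) (Fin 3) ℝ) := by
  have h := path_mem_component
    (F := {A : Matrix (Fin 3) (Fin 3) ℝ |
        Aᵀ * !![-1, 0, 0; 0, 1, 0; 0, 0, 1] * A = !![-1, 0, 0; 0, 1, 0; 0, 0, 1]})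
    (fun t => rotM (t * θ))
    (by
      apply continuous_matrix
      intro i j
      fin_cases i <;> fin_cases j <;> simp [rotM] <;> fun_prop)
    (by
      ext i j
      fin_cases i <;> fin_cases j <;>
        simp [rotM, Matrix.one_apply, Matrix.vecHead, Matrix.vecTail])
    (by
      intro t
      simp only [Set.mem_setOf_eq, rotM]
      ext i j
      fin_cases i <;> fin_cases j <;>
        simp [Matrix.mul_apply, Fin.sum_univ_three, Matrix.transpose_apply, Matrix.vecHead, Matrix.vecTail] <;>
        nlinarith [Real.sin_sq_add_cos_sq (t * θ)])
  simpa using h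

lemma boost_mem (u : ℝ) :
    boostM u ∈ connectedComponentIn
      {A : Matrix (Fin 3) (Fin 3) ℝ |
        Aᵀ * !![-1, 0, 0; 0, 1, 0; 0, 0, 1] * A = !![-1, 0, 0; 0, 1, 0; 0, 0, 1]}
      (1 : Matrix (Fin 3) (Fin 3) ℝ) := by
  have h := path_mem_component
    (F := {A : Matrix (Fin 3) (Fin 3) ℝ |
        Aᵀ * !![-1, 0, 0; 0, 1, 0; 0, 0, 1] * A = !![-1, 0, 0; 0, 1, 0; 0, 0, 1]})
    (fun t => boostM (t * u))
    (by
      apply continuous_matrix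
      intro i j
      fin_cases i <;> fin_cases j <;> simp [boostM] <;> fun_prop)
    (by
      ext i j
      fin_cases i <;> fin_cases j <;>
        simp [boostM, Matrix.one_apply, Matrix.vecHead, Matrix.vecTail])
    (by
      intro t
      simp only [Set.mem_setOf_eq, boostM]
      ext i j
      fin_cases i <;> fin_cases j <;>
        simp [Matrix.mul_apply, Fin.sum_univ_three, Matrix.transpose_apply, Matrix.vecHead, Matrix.vecTail] <;>
        nlinarith [Real.cosh_sq_sub_sinh_sq (t * u)])
  simpa using h

/-- A symmetric bilinear form on `ℝ³` invariant under the identity component of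
`O(2,1)` (the group of matrices preserving `g = diag(−1,1,1)`) is a scalar multiple
of `g`. -/
theorem invariant_form_is_multiple_of_metric
    (S : Matrix (Fin 3) (Fin 3) ℝ) (hS : S.IsSymm)
    (hinv : ∀ A ∈ connectedComponentIn
        {A : Matrix (Fin 3) (Fin 3) ℝ |
          Aᵀ * !![-1, 0, 0; 0, 1, 0; 0, 0, 1] * A = !![-1, 0, 0; 0, 1, 0; 0, 0, 1]}
        (1 : Matrix (Fin 3) (Fin 3) ℝ),
      A * S * Aᵀ = S) :
    ∃ c : ℝ, S = c • !![-1, 0, 0; 0, 1, 0; 0, 0, 1] := by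
  have hπ := hinv _ (rot_mem π)
  have hπ2 := hinv _ (rot_mem (π / 2))
  have hB := hinv _ (boost_mem 1)
  rw [rotM] at hπ hπ2
  rw [boostM] at hB
  have hsymm := fun i j => congrFun (congrFun hS i) j
  simp only [Matrix.transpose_apply] at hsymm
  have e01 : S 0 1 = 0 := by
    have h := congrFun (congrFun hπ 0) 1
    simp [Matrix.mul_apply, Fin.sum_univ_three, Matrix.transpose_apply, Matrix.vecHead, Matrix.vecTail, Matrix.vecMul, dotProduct, Real.cos_pi, Real.sin_pi] at h
    linarith
  have e02 : S 0 2 = 0 := by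
    have h := congrFun (congrFun hπ 0) 2
    simp [Matrix.mul_apply, Fin.sum_univ_three, Matrix.transpose_apply, Matrix.vecHead, Matrix.vecTail, Matrix.vecMul, dotProduct, Real.cos_pi, Real.sin_pi] at h
    linarith
  have e12 : S 1 2 = 0 := by
    have h := congrFun (congrFun hπ2 1) 2
    simp [Matrix.mul_apply, Fin.sum_univ_three, Matrix.transpose_apply, Matrix.vecHead, Matrix.vecTail, Matrix.vecMul, dotProduct, Real.cos_pi_div_two, Real.sin_pi_div_two] at h
    have h21 := hsymm 2 1
    linarith
  have e11 : S 2 2 = S 1 1 := by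
    have h := congrFun (congrFun hπ2 1) 1
    simp [Matrix.mul_apply, Fin.sum_univ_three, Matrix.transpose_apply, Matrix.vecHead, Matrix.vecTail, Matrix.vecMul, dotProduct, Real.cos_pi_div_two, Real.sin_pi_div_two] at h
    linarith
  have e00 : S 1 1 = -S 0 0 := by
    have h := congrFun (congrFun hB 0) 1
    simp [Matrix.mul_apply, Fin.sum_univ_three, Matrix.transpose_apply, Matrix.vecHead, Matrix.vecTail, Matrix.vecMul, dotProduct] at h
    have h10 := hsymm 1 0
    have hc : Real.cosh 1 > 0 := Real.cosh_pos 1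
    have hs : Real.sinh 1 > 0 := by positivity
    nlinarith [mul_pos hc hs, sq_nonneg (Real.cosh 1), sq_nonneg (Real.sinh 1)]
  refine ⟨-S 0 0, ?_⟩
  have h10 := hsymm 1 0
  have h20 := hsymm 2 0
  have h21 := hsymm 2 1
  ext i j
  fin_cases i <;> fin_cases j <;> simp [Matrix.smul_apply, Matrix.vecHead, Matrix.vecTail] <;> linarith
end

section
/- The three polynomials I₁ = R, I₂ = 3Ψ2² + Ψ0², I₃ = −Ψ2³ + Ψ2Ψ0² in ℝ[R,Ψ0,Ψ2] are algebraically independent over ℝ. -/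
open MvPolynomial

/-- A multivariate real polynomial vanishing on a product of infinite sets is zero. -/
lemma mv_zero_of_vanish : ∀ (n : ℕ) (S : Fin n → Set ℝ), (∀ i, (S i).Infinite) →
    ∀ p : MvPolynomial (Fin n) ℝ,
      (∀ x : Fin n → ℝ, (∀ i, x i ∈ S i) → eval x p = 0) → p = 0 := by
  intro n
  induction n with
  | zero =>
      intro S hS p hp
      obtain ⟨r, rfl⟩ := C_surjective (Fin 0) p
      have := hp (fun i => i.elim0) (fun i => i.elim0)
      simpa using this
  | succ n ih =>
      intro S hS p hp
      set q := finSuccEquiv ℝ n p with hq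
      have key : ∀ s : Fin n → ℝ, (∀ i, s i ∈ S i.succ) →
          Polynomial.map (eval s) q = 0 := by
        intro s hs
        apply Polynomial.eq_zero_of_infinite_isRoot
        apply Set.Infinite.mono (s := S 0) ?_ (hS 0)
        intro y hy
        have hmem : ∀ i, (Fin.cons y s : Fin (n+1) → ℝ) i ∈ S i := by
          intro i
          refine Fin.cases ?_ ?_ i
          · simpa using hy
          · intro j; simpa using hs j
        have h0 := hp (Fin.cons y s) hmem
        rw [eval_eq_eval_mv_eval'] at h0
        simpa [Set.mem_setOf_eq, Polynomial.IsRoot, hq] using h0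
      have hqz : q = 0 := by
        rw [Polynomial.ext_iff]
        intro k
        rw [Polynomial.coeff_zero]
        apply ih (fun i => S i.succ) (fun i => hS i.succ)
        intro s hs
        have h2 := congrArg (fun r => Polynomial.coeff r k) (key s hs)
        simpa [Polynomial.coeff_map] using h2
      apply (finSuccEquiv ℝ n).injective
      rw [map_zero, ← hq]
      exact hqz

/-- The three zeroth-order scalar curvature invariants of a generic 3D P-type I
spacetime, `I₁ = R`, `I₂ = 3Ψ₂² + Ψ₀²`, `I₃ = −Ψ₂³ + Ψ₂Ψ₀²`, viewed as polynomials in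
`ℝ[R, Ψ₀, Ψ₂]` (variables `X 0 = R`, `X 1 = Ψ₀`, `X 2 = Ψ₂`), are algebraically
independent over `ℝ`. -/
theorem zeroth_order_invariants_algebraically_independent :
    AlgebraicIndependent ℝ
      ![(X 0 : MvPolynomial (Fin 3) ℝ),
        3 * (X 2) ^ 2 + (X 1) ^ 2,
        -(X 2) ^ 3 + (X 2) * (X 1) ^ 2] := by
  rw [algebraicIndependent_iff]
  intro p hp
  have hev : ∀ a b c : ℝ, eval ![a, 3*c^2 + b^2, c*b^2 - c^3] p = 0 := by
    intro a b c
    have h := congrArg (aeval (![a, b, c] : Fin 3 → ℝ)) hp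
    rw [comp_aeval_apply, map_zero] at h
    have hfun : (fun i => aeval (![a, b, c] : Fin 3 → ℝ)
        (![(X 0 : MvPolynomial (Fin 3) ℝ), 3 * (X 2) ^ 2 + (X 1) ^ 2,
          -(X 2) ^ 3 + (X 2) * (X 1) ^ 2] i))
        = ![a, 3*c^2 + b^2, c*b^2 - c^3] := by
      funext i
      fin_cases i <;> simp <;> ring
    rw [hfun] at h
    rw [← coe_aeval_eq_eval]
    exact h
  apply mv_zero_of_vanish 3 ![Set.univ, Set.Ioi 100, Set.Ioo 0 1]
  · intro i
    fin_cases i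
    · exact Set.infinite_univ
    · exact Set.Ioi_infinite 100
    · exact Set.Ioo_infinite (by norm_num)
  · intro x hx
    have hu : x 1 ∈ Set.Ioi (100:ℝ) := by simpa using hx 1
    have hw : x 2 ∈ Set.Ioo (0:ℝ) 1 := by simpa using hx 2
    set u := x 1 with hudef
    set w := x 2 with hwdef
    have hu100 : (100:ℝ) < u := hu
    have hcont : ContinuousOn (fun c : ℝ => u*c - 4*c^3) (Set.Icc 0 1) := by fun_prop
    have hw' : w ∈ Set.Ioo ((fun c : ℝ => u*c - 4*c^3) 0) ((fun c : ℝ => u*c - 4*c^3) 1) := by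
      constructor
      · show u*0 - 4*0^3 < w
        have := hw.1; nlinarith
      · show w < u*1 - 4*1^3
        have := hw.2; nlinarith
    obtain ⟨c, hc, hfc⟩ := intermediate_value_Ioo (by norm_num : (0:ℝ) ≤ 1) hcont hw'
    have hfc' : u*c - 4*c^3 = w := hfc
    have hc2 : 3*c^2 < u := by nlinarith [hc.1, hc.2]
    set b := Real.sqrt (u - 3*c^2) with hb
    have hb2 : b^2 = u - 3*c^2 := Real.sq_sqrt (by linarith)
    have hx0 : x = ![x 0, 3*c^2 + b^2, c*b^2 - c^3] := by
      funext i
      fin_cases i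
      · simp
      · show u = 3*c^2 + b^2
        rw [hb2]; ring
      · show w = c*b^2 - c^3
        rw [hb2]; linear_combination -hfc'
    rw [hx0]
    exact hev (x 0) b c
end
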